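/- arXiv:1909.08687 — 10 statements merged into one kernel-verified Lean document; each statement's English description precedes it below -/
import Mathlib

section
/- If a binary operation + on a nonempty set G satisfies the Hilbert property H (for all a, b in G the equations x + a = b and a + y = b each have a unique solution) and the cyclic associativity I property (a + (b + c) = c + (a + b) for all a, b, c in G), then there exists a two-sided neutral element e in G with e + a = a + e = a for all a in G, i.e., (G, +) is a loop. -/
section CyclicAssoc

variable {G : Type*} {op : G → G → G}

theorem leftNeutral_of_op_eq_self_of_cyclicAssoc
    (hcyc : ∀ a b c : G, op a (op b c) = op c (op a b)) {a e : G}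
    (hsolve : ∀ z : G, ∃ x : G, op x a = z) (hae : op a e = a) (z : G) :
    op e z = z := by
  obtain ⟨c, rfl⟩ := hsolve z
  calc op e (op c a) = op a (op e c) := hcyc e c a
    _ = op c (op a e) := hcyc a e c
    _ = op c a := by rw [hae]

theorem rightNeutral_of_leftNeutral_of_cyclicAssoc
    (hcyc : ∀ a b c : G, op a (op b c) = op c (op a b)) {e : G}
    (he : ∀ z : G, op e z = z) (x : G) :
    op x e = x :=
  calc op x e = op x (op e e) := by rw [he]
    _ = op e (op e x) := (hcyc e e x).symm
    _ = x := by rw [he, he]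

end CyclicAssoc

/-- A quasigroup satisfying CAI is a loop: it has a two-sided neutral element. -/
theorem stmt_10 {G : Type*} [Nonempty G] (op : G → G → G)
    (hH : ∀ a b : G, (∃! x : G, op x a = b) ∧ (∃! y : G, op a y = b))
    (hprop : ∀ a b c : G, op a (op b c) = op c (op a b)) :
    ∃ e : G, ∀ a : G, op e a = a ∧ op a e = a := by
  obtain ⟨a⟩ := ‹Nonempty G›
  obtain ⟨e, hae, -⟩ := (hH a a).2
  have hleft : ∀ z : G, op e z = z :=
    leftNeutral_of_op_eq_self_of_cyclicAssoc hprop (fun z => (hH a z).1.exists) hae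
  exact ⟨e, fun x => ⟨hleft x, rightNeutral_of_leftNeutral_of_cyclicAssoc hprop hleft x⟩⟩
end

section
/- If a binary operation + on a nonempty set G satisfies the Hilbert property H (for all a, b in G the equations x + a = b and a + y = b each have a unique solution) and the cyclic associativity II property (a + (b + c) = (c + a) + b for all a, b, c in G), then there exists a two-sided neutral element e in G with e + a = a + e = a for all a in G, i.e., (G, +) is a loop. -/
/-!
For each `b` let `u` solve `b + u = b`. Cyclic associativity with `c = u` gives
`a + b = (u + a) + b`, so by right cancellation `u` is a left neutral element. Under right
cancellation a left neutral element is unique, so these solutions `u` coincide for all `b`,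
and their common value is neutral on both sides.
-/

section CyclicAssociative

variable {G : Type*} (op : G → G → G)

theorem forall_op_eq_of_op_eq_self (hcancel : ∀ a, Function.Injective (op · a))
    (hcyc : ∀ a b c, op a (op b c) = op (op c a) b) {b u : G} (hu : op b u = b) (a : G) :
    op u a = a :=
  hcancel b (by simpa only [hu] using (hcyc a b u).symm)

theorem eq_of_forall_op_eq (hcancel : ∀ a, Function.Injective (op · a)) {e e' : G}
    (he : ∀ a, op e a = a) (he' : ∀ a, op e' a = a) : e = e' :=
  hcancel e ((he e).trans (he' e).symm)

end CyclicAssociative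

/-- A quasigroup satisfying CAII is a loop: it has a two-sided neutral element. -/
theorem stmt_11 {G : Type*} [Nonempty G] (op : G → G → G)
    (hH : ∀ a b : G, (∃! x : G, op x a = b) ∧ (∃! y : G, op a y = b))
    (hprop : ∀ a b c : G, op a (op b c) = op (op c a) b) :
    ∃ e : G, ∀ a : G, op e a = a ∧ op a e = a := by
  have hcancel : ∀ a, Function.Injective (op · a) :=
    fun a _ _ hxy => (hH a _).1.unique rfl hxy.symm
  have hleft {b u : G} (hu : op b u = b) : ∀ a, op u a = a :=
    forall_op_eq_of_op_eq_self op hcancel hprop hu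
  obtain ⟨a₀⟩ := ‹Nonempty G›
  obtain ⟨e, he⟩ := (hH a₀ a₀).2.exists
  refine ⟨e, fun a => ⟨hleft he a, ?_⟩⟩
  obtain ⟨u, hu⟩ := (hH a a).2.exists
  rwa [eq_of_forall_op_eq op hcancel (hleft hu) (hleft he)] at hu
end

section
/- If a binary operation + on G satisfies the Hilbert property H (for all a, b in G the equations x + a = b and a + y = b each have a unique solution) and the cyclic associativity II property (a + (b + c) = (c + a) + b for all a, b, c in G), then + is associative: a + (b + c) = (a + b) + c for all a, b, c in G. -/
/-!
A right-local identity `e` with `a + e = a` is a global left identity: CAII gives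
`x + a = x + (a + e) = (e + x) + a`, and right cancellation removes `a`. With a left identity,
CAII specialises to `x + e = x` and then to commutativity, and commutativity turns CAII into
associativity.
-/

section CyclicAssociativity

variable {G : Type*} (op : G → G → G)

theorem op_right_cancel (hH : ∀ a b : G, ∃! x : G, op x a = b) {p x y : G}
    (h : op x p = op y p) : x = y :=
  (hH p (op y p)).unique h rfl

variable {op}

theorem op_left_id_of_op_eq_self (hH : ∀ a b : G, ∃! x : G, op x a = b)
    (hCAII : ∀ a b c : G, op a (op b c) = op (op c a) b) {a e : G} (he : op a e = a) (x : G) :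
    op e x = x := by
  refine op_right_cancel op hH (p := a) ?_
  rw [← hCAII, he]

theorem op_right_id_of_left_id (hCAII : ∀ a b c : G, op a (op b c) = op (op c a) b) {e : G}
    (he : ∀ x, op e x = x) (x : G) : op x e = x := by
  simpa only [he] using hCAII e x e

theorem op_comm_of_left_id (hCAII : ∀ a b c : G, op a (op b c) = op (op c a) b) {e : G}
    (he : ∀ x, op e x = x) (x y : G) : op x y = op y x := by
  simpa only [he, op_right_id_of_left_id hCAII he] using hCAII x e y

theorem op_assoc_of_comm (hCAII : ∀ a b c : G, op a (op b c) = op (op c a) b)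
    (hcomm : ∀ x y : G, op x y = op y x) (a b c : G) : op a (op b c) = op (op a b) c := by
  rw [hCAII, ← hcomm, hCAII]

end CyclicAssociativity

/-- A quasigroup satisfying CAII is associative. -/
theorem stmt_12 {G : Type*} (op : G → G → G)
    (hH : ∀ a b : G, (∃! x : G, op x a = b) ∧ (∃! y : G, op a y = b))
    (hCAII : ∀ a b c : G, op a (op b c) = op (op c a) b) :
    ∀ a b c : G, op a (op b c) = op (op a b) c := by
  intro a
  obtain ⟨e, he, -⟩ := (hH a a).2
  have hleft : ∀ x, op e x = x := op_left_id_of_op_eq_self (fun p q ↦ (hH p q).1) hCAII he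
  exact op_assoc_of_comm hCAII (op_comm_of_left_id hCAII hleft) a
end

section
/- If a binary operation + on G satisfies the Hilbert property H (for all a, b in G the equations x + a = b and a + y = b each have a unique solution) and the cyclic associativity II property (a + (b + c) = (c + a) + b for all a, b, c in G), then + also satisfies cyclic associativity I: a + (b + c) = c + (a + b) for all a, b, c in G. -/
/-! Cyclic associativity II alone rearranges a four-fold product: `((c d) a) b = ((a b) c) d`.
Taking `d = b` and cancelling `b` on the right gives `(c b) a = (a b) c`; combined with CAII this
yields `a (b c) = a (c b)`, so the operation is commutative after cancelling `a` on the left, and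
CAI follows from CAII, commutativity and `(c b) a = (a b) c`. -/

open Function

section CyclicAssociativity

variable {G : Type*} {op : G → G → G}

theorem op_op_op_eq_of_cyclicAssoc (hCA : ∀ a b c : G, op a (op b c) = op (op c a) b)
    (a b c d : G) : op (op (op c d) a) b = op (op (op a b) c) d :=
  calc op (op (op c d) a) b = op a (op b (op c d)) := (hCA a b (op c d)).symm
    _ = op a (op (op d b) c) := by rw [hCA b c d]
    _ = op (op c a) (op d b) := hCA a (op d b) c
    _ = op (op b (op c a)) d := hCA (op c a) d b
    _ = op (op (op a b) c) d := by rw [hCA b c a]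

theorem op_op_swap_of_cyclicAssoc (hCA : ∀ a b c : G, op a (op b c) = op (op c a) b)
    (hR : ∀ a : G, Injective fun x => op x a) (a b c : G) :
    op (op c b) a = op (op a b) c :=
  hR b (op_op_op_eq_of_cyclicAssoc hCA a b c b)

theorem op_comm_of_cyclicAssoc (hCA : ∀ a b c : G, op a (op b c) = op (op c a) b)
    (hL : ∀ a : G, Injective (op a)) (hR : ∀ a : G, Injective fun x => op x a) (b c : G) :
    op b c = op c b :=
  hL b <| calc op b (op b c) = op (op c b) b := hCA b b c
    _ = op (op b b) c := op_op_swap_of_cyclicAssoc hCA hR b b c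
    _ = op b (op c b) := (hCA b c b).symm

end CyclicAssociativity

/-- A quasigroup satisfying CAII also satisfies CAI. -/
theorem stmt_13 {G : Type*} (op : G → G → G)
    (hH : ∀ a b : G, (∃! x : G, op x a = b) ∧ (∃! y : G, op a y = b))
    (hCAII : ∀ a b c : G, op a (op b c) = op (op c a) b) :
    ∀ a b c : G, op a (op b c) = op c (op a b) := by
  have hL : ∀ a : G, Injective (op a) := fun a =>
    ((bijective_iff_existsUnique _).2 fun b => (hH a b).2).injective
  have hR : ∀ a : G, Injective fun x => op x a := fun a =>
    ((bijective_iff_existsUnique _).2 fun b => (hH a b).1).injective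
  have hcomm := op_comm_of_cyclicAssoc hCAII hL hR
  intro a b c
  calc op a (op b c) = op (op c a) b := hCAII a b c
    _ = op (op b a) c := op_op_swap_of_cyclicAssoc hCAII hR b a c
    _ = op c (op a b) := by rw [hcomm, hcomm b a]
end

section
/- If a binary operation + on a nonempty set G satisfies the Hilbert property H (for all a, b in G the equations x + a = b and a + y = b each have a unique solution) and the Abel-Grassmann II property (a + (b + c) = (b + a) + c for all a, b, c in G), then there exists a two-sided neutral element e in G with e + a = a + e = a for all a in G, i.e., (G, +) is a loop. -/
/-!
Pick `a` and the solution `e` of `e + a = a`. AGII gives `a + (e + c) = (e + a) + c = a + c`,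
so cancelling `a` on the left makes `e` left neutral; then `(c + e) + a = e + (c + a) = c + a`,
and cancelling `a` on the right makes `e` right neutral as well.
-/

open Function

namespace AbelGrassmannII

variable {G : Type*} {op : G → G → G}

theorem left_neutral_of_op_eq_self
    (hAG : ∀ a b c : G, op a (op b c) = op (op b a) c) {a e : G}
    (hinj : Injective (op a)) (he : op e a = a) (c : G) : op e c = c :=
  hinj <| by rw [hAG, he]

theorem right_neutral_of_left_neutral
    (hAG : ∀ a b c : G, op a (op b c) = op (op b a) c) {a e : G}
    (hinj : Injective (op · a)) (he : ∀ c, op e c = c) (c : G) : op c e = c :=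
  hinj <| by simp only [← hAG, he]

end AbelGrassmannII

/-- A quasigroup satisfying AGII is a loop: it has a two-sided neutral element. -/
theorem stmt_14 {G : Type*} [Nonempty G] (op : G → G → G)
    (hH : ∀ a b : G, (∃! x : G, op x a = b) ∧ (∃! y : G, op a y = b))
    (hprop : ∀ a b c : G, op a (op b c) = op (op b a) c) :
    ∃ e : G, ∀ a : G, op e a = a ∧ op a e = a := by
  obtain ⟨a⟩ := ‹Nonempty G›
  obtain ⟨e, he, -⟩ := (hH a a).1
  have hinjLeft : Injective (op a) := fun _ y h => (hH a (op a y)).2.unique h rfl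
  have hinjRight : Injective (op · a) := fun _ x h => (hH a (op x a)).1.unique h rfl
  have hleft := AbelGrassmannII.left_neutral_of_op_eq_self hprop hinjLeft he
  exact ⟨e, fun c =>
    ⟨hleft c, AbelGrassmannII.right_neutral_of_left_neutral hprop hinjRight hleft c⟩⟩
end

section
/- If a binary operation + on a nonempty set G satisfies the Hilbert property H (for all a, b in G the equations x + a = b and a + y = b each have a unique solution) and the reduced product property ((a + b) + c = a + (c + b) for all a, b, c in G), then there exists a two-sided neutral element e in G with e + a = a + e = a for all a in G, i.e., (G, +) is a loop. -/
/-!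
If `a + e = a`, then R gives `a + c = (a + e) + c = a + (c + e)`, so left cancellation makes `e`
a right identity; then `b + b = (b + b) + e = b + (e + b)` makes it a left identity as well.
-/

section ReducedProduct

variable {G : Type*} {op : G → G → G}

theorem injective_op_of_existsUnique (h : ∀ a b : G, ∃! y, op a y = b) (a : G) :
    Function.Injective (op a) :=
  fun _ z hyz => (h a (op a z)).unique hyz rfl

theorem op_right_neutral_of_op_eq_self (hinj : ∀ a : G, Function.Injective (op a))
    (hprop : ∀ a b c : G, op (op a b) c = op a (op c b)) {a e : G} (he : op a e = a) (c : G) :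
    op c e = c :=
  (hinj a (by rw [← hprop, he])).symm

theorem op_left_neutral_of_right_neutral (hinj : ∀ a : G, Function.Injective (op a))
    (hprop : ∀ a b c : G, op (op a b) c = op a (op c b)) {e : G}
    (he : ∀ c, op c e = c) (b : G) :
    op e b = b :=
  (hinj b (by rw [← hprop, he])).symm

end ReducedProduct

/-- A quasigroup satisfying R is a loop: it has a two-sided neutral element. -/
theorem stmt_15 {G : Type*} [Nonempty G] (op : G → G → G)
    (hH : ∀ a b : G, (∃! x : G, op x a = b) ∧ (∃! y : G, op a y = b))
    (hprop : ∀ a b c : G, op (op a b) c = op a (op c b)) :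
    ∃ e : G, ∀ a : G, op e a = a ∧ op a e = a := by
  obtain ⟨a⟩ := ‹Nonempty G›
  have hinj := injective_op_of_existsUnique fun a b => (hH a b).2
  obtain ⟨e, he, -⟩ := (hH a a).2
  have hright := op_right_neutral_of_op_eq_self hinj hprop he
  exact ⟨e, fun b => ⟨op_left_neutral_of_right_neutral hinj hprop hright b, hright b⟩⟩
end

section
/- Let G be a nonempty set with a binary operation +. Then (G, +) is an abelian group (+ is associative and commutative, there is a two-sided neutral element e, and every a in G has b with a + b = e) if and only if + satisfies the Hilbert property H (for all a, b in G the equations x + a = b and a + y = b each have a unique solution) and the cyclic associativity I property (a + (b + c) = c + (a + b) for all a, b, c in G). -/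
/-!
An abelian group satisfies CAI since `a + (b + c) = (a + b) + c = c + (a + b)`, and its equations
are solved by adding inverses. Conversely, take `e` with `a₀ + e = a₀`; writing any `c` as
`b + a₀`, CAI turns `b + (a₀ + e)` into `e + (b + a₀)`, so `e` is a left identity. CAI with identity arguments then yields that `e` is two-sided and that `+`
is commutative, and with commutativity CAI is associativity.
-/

def CyclicAssoc {G : Type*} (op : G → G → G) : Prop :=
  ∀ a b c : G, op a (op b c) = op c (op a b)

namespace CyclicAssoc

variable {G : Type*} {op : G → G → G}

theorem of_assoc_of_comm (assoc : ∀ a b c : G, op a (op b c) = op (op a b) c)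
    (comm : ∀ a b : G, op a b = op b a) : CyclicAssoc op := fun a b c => by
  rw [assoc, comm (op a b) c]

variable (h : CyclicAssoc op)
include h

theorem left_id_of_op_eq_self {a e : G} (hae : op a e = a) (hsolv : ∀ c : G, ∃ b, op b a = c) :
    ∀ c : G, op e c = c := fun c => by
  obtain ⟨b, rfl⟩ := hsolv c
  simpa only [hae] using (h b a e).symm

theorem right_id_of_left_id {e : G} (hl : ∀ c : G, op e c = c) : ∀ c : G, op c e = c := fun c => by
  simpa only [hl] using h e c e

theorem comm_of_left_id {e : G} (hl : ∀ c : G, op e c = c) : ∀ a c : G, op a c = op c a :=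
  fun a c => by simpa only [hl, h.right_id_of_left_id hl] using h a e c

theorem assoc_of_comm (comm : ∀ a b : G, op a b = op b a) :
    ∀ a b c : G, op a (op b c) = op (op a b) c := fun a b c => by
  rw [h a b c, comm c]

end CyclicAssoc

theorem existsUnique_op_eq_of_assoc_of_comm {G : Type*} {op : G → G → G}
    (assoc : ∀ a b c : G, op a (op b c) = op (op a b) c) (comm : ∀ a b : G, op a b = op b a)
    {e a a' : G} (he : ∀ c : G, op c e = c) (ha' : op a a' = e) (b : G) :
    ∃! y : G, op a y = b := by
  refine ⟨op a' b, ?_, fun y hy => ?_⟩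
  · change op a (op a' b) = b
    rw [assoc, ha', comm, he]
  · calc y = op (op a' a) y := by rw [comm a', ha', comm, he]
      _ = op a' b := by rw [← assoc, hy]

/-- (G, +) is an abelian group iff it satisfies H and CAI. -/
theorem stmt_16 {G : Type*} [Nonempty G] (op : G → G → G) :
    ((∀ a b c : G, op a (op b c) = op (op a b) c) ∧
     (∀ a b : G, op a b = op b a) ∧
     (∃ e : G, (∀ a : G, op e a = a ∧ op a e = a) ∧ (∀ a : G, ∃ b : G, op a b = e)))
    ↔
    ((∀ a b : G, (∃! x : G, op x a = b) ∧ (∃! y : G, op a y = b)) ∧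
     (∀ a b c : G, op a (op b c) = op c (op a b))) := by
  constructor
  · rintro ⟨assoc, comm, e, he, hinv⟩
    refine ⟨fun a b => ?_, CyclicAssoc.of_assoc_of_comm assoc comm⟩
    obtain ⟨a', ha'⟩ := hinv a
    have hsolve := existsUnique_op_eq_of_assoc_of_comm assoc comm (fun c => (he c).2) ha' b
    exact ⟨by simpa only [comm _ a] using hsolve, hsolve⟩
  · rintro ⟨hH, cai : CyclicAssoc op⟩
    obtain ⟨a₀⟩ := ‹Nonempty G›
    obtain ⟨e, he, -⟩ := (hH a₀ a₀).2
    have hleft := cai.left_id_of_op_eq_self he fun c => (hH a₀ c).1.exists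
    have comm := cai.comm_of_left_id hleft
    exact ⟨cai.assoc_of_comm comm, comm, e, fun a => ⟨hleft a, cai.right_id_of_left_id hleft a⟩,
      fun a => (hH a e).2.exists⟩
end

section
/- Let G be a nonempty set with a binary operation +. Then (G, +) is an abelian group (+ is associative and commutative, there is a two-sided neutral element e, and every a in G has b with a + b = e) if and only if + satisfies the Hilbert property H (for all a, b in G the equations x + a = b and a + y = b each have a unique solution) and the cyclic associativity II property (a + (b + c) = (c + a) + b for all a, b, c in G). -/
/-!
Given H and CAII, pick any `a` and let `e` solve `a + e = a`. Applying CAII to `(x, a, e)` and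
cancelling `a` on the right (uniqueness in H) shows that `e` is a left identity; CAII with the
identity in one slot then yields that `e` is a right identity, that `+` is commutative, and with
commutativity CAII becomes associativity. Inverses are the solutions of `a + y = e`.
-/

section CyclicAssociativity

variable {G : Type*} {op : G → G → G}

theorem existsUnique_op_right_eq (assoc : ∀ a b c, op a (op b c) = op (op a b) c) {e a i : G}
    (he : ∀ x, op e x = x) (hai : op a i = e) (hia : op i a = e) (b : G) :
    ∃! y, op a y = b := by
  refine ⟨op i b, show op a (op i b) = b by rw [assoc, hai, he], fun y hy => ?_⟩
  rw [← hy, assoc, hia, he]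

theorem cyclic_of_assoc_of_comm (assoc : ∀ a b c, op a (op b c) = op (op a b) c)
    (comm : ∀ a b, op a b = op b a) (a b c : G) : op a (op b c) = op (op c a) b := by
  rw [assoc, comm (op a b) c, assoc]

theorem right_cancel_of_existsUnique (H : ∀ a b : G, ∃! x, op x a = b) {a x y : G}
    (h : op x a = op y a) : x = y :=
  (H a (op y a)).unique h rfl

variable (cyc : ∀ a b c, op a (op b c) = op (op c a) b)
include cyc

theorem op_left_eq_self_of_cyclic (cancel : ∀ {a x y : G}, op x a = op y a → x = y) {a e : G}
    (hae : op a e = a) (x : G) : op e x = x :=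
  cancel (by rw [← cyc, hae])

theorem op_right_eq_self_of_cyclic {e : G} (he : ∀ x, op e x = x) (x : G) : op x e = x := by
  simpa only [he] using cyc e x e

theorem comm_of_cyclic {e : G} (he : ∀ x, op e x = x) (a b : G) : op a b = op b a := by
  simpa only [he, op_right_eq_self_of_cyclic cyc he] using cyc a e b

theorem assoc_of_cyclic (comm : ∀ a b : G, op a b = op b a) (a b c : G) :
    op a (op b c) = op (op a b) c := by
  rw [cyc, comm _ b, cyc]

end CyclicAssociativity

/-- (G, +) is an abelian group iff it satisfies H and CAII. -/
theorem stmt_17 {G : Type*} [Nonempty G] (op : G → G → G) :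
    ((∀ a b c : G, op a (op b c) = op (op a b) c) ∧
     (∀ a b : G, op a b = op b a) ∧
     (∃ e : G, (∀ a : G, op e a = a ∧ op a e = a) ∧ (∀ a : G, ∃ b : G, op a b = e)))
    ↔
    ((∀ a b : G, (∃! x : G, op x a = b) ∧ (∃! y : G, op a y = b)) ∧
     (∀ a b c : G, op a (op b c) = op (op c a) b)) := by
  constructor
  · rintro ⟨assoc, comm, e, he, hinv⟩
    refine ⟨fun a b => ?_, cyclic_of_assoc_of_comm assoc comm⟩
    obtain ⟨i, hai⟩ := hinv a
    have hia : op i a = e := by rw [comm, hai]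
    have hsolve := existsUnique_op_right_eq assoc (fun x => (he x).1) hai hia b
    simp only [comm _ a]
    exact ⟨hsolve, hsolve⟩
  · rintro ⟨H, cyc⟩
    obtain ⟨a⟩ := ‹Nonempty G›
    obtain ⟨e, hae, -⟩ := (H a a).2
    have hl := op_left_eq_self_of_cyclic cyc
      (right_cancel_of_existsUnique fun a b => (H a b).1) hae
    have comm := comm_of_cyclic cyc hl
    exact ⟨assoc_of_cyclic cyc comm, comm, e,
      fun x => ⟨hl x, op_right_eq_self_of_cyclic cyc hl x⟩, fun x => (H x e).2.exists⟩
end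

section
/- Let G be a nonempty set with a binary operation +. Then (G, +) is an abelian group (+ is associative and commutative, there is a two-sided neutral element e, and every a in G has b with a + b = e) if and only if + satisfies the Hilbert property H (for all a, b in G the equations x + a = b and a + y = b each have a unique solution) and the Abel-Grassmann II property (a + (b + c) = (b + a) + c for all a, b, c in G). -/
/-!
Right cancellation (from the uniqueness in H) lets one compare two expressions by adding the same
element on the right. Expanding `a + (b + (c + d))` with AGII in two orders gives
`(c + (b + a)) + d = ((c + b) + a) + d`, hence associativity; then
`(a + b) + c = a + (b + c) = (b + a) + c` gives commutativity. The solution `e` of `e + a₀ = a₀`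
is neutral because every element is `a₀ + y`, and solvability of `a + y = e` gives inverses.
Conversely, in an abelian group `x + a = b` and `a + y = b` have the unique solution `-a + b`.
-/

namespace AbelGrassmann

variable {G : Type*} {op : G → G → G}

theorem cancel_right (hsol : ∀ a b : G, ∃! x : G, op x a = b) {a x y : G}
    (h : op x a = op y a) : x = y :=
  (hsol a (op y a)).unique h rfl

section Cancellative

variable (hcancel : ∀ a x y : G, op x a = op y a → x = y)
  (hAG : ∀ a b c : G, op a (op b c) = op (op b a) c)
include hcancel hAG

theorem assoc_of_cancel_right (a b c : G) : op a (op b c) = op (op a b) c := by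
  apply hcancel c
  have h₁ : op c (op b (op a c)) = op (op a (op b c)) c := by
    rw [hAG c b (op a c), hAG (op b c) a c]
  have h₂ : op c (op b (op a c)) = op (op (op a b) c) c := by
    rw [hAG b a c, hAG c (op a b) c]
  rw [← h₁, h₂]

theorem comm_of_cancel_right (a b : G) : op a b = op b a := by
  apply hcancel a
  rw [← assoc_of_cancel_right hcancel hAG, hAG]

end Cancellative

theorem left_neutral_of_solvable {a₀ : G} (hassoc : ∀ a b c : G, op a (op b c) = op (op a b) c)
    (hsol : ∀ b : G, ∃ y : G, op a₀ y = b) {e : G} (he : op e a₀ = a₀) (b : G) : op e b = b := by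
  obtain ⟨y, rfl⟩ := hsol b
  rw [hassoc, he]

theorem existsUnique_right_solution (hassoc : ∀ a b c : G, op a (op b c) = op (op a b) c)
    {e : G} (he : ∀ a : G, op e a = a) {a a' : G} (ha : op a a' = e) (ha' : op a' a = e) (b : G) :
    ∃! y : G, op a y = b := by
  refine ⟨op a' b, (by rw [hassoc, ha, he] : op a (op a' b) = b), fun y hy => ?_⟩
  rw [← hy, hassoc, ha', he]

end AbelGrassmann

open AbelGrassmann in
/-- (G, +) is an abelian group iff it satisfies H and AGII. -/
theorem stmt_18 {G : Type*} [Nonempty G] (op : G → G → G) :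
    ((∀ a b c : G, op a (op b c) = op (op a b) c) ∧
     (∀ a b : G, op a b = op b a) ∧
     (∃ e : G, (∀ a : G, op e a = a ∧ op a e = a) ∧ (∀ a : G, ∃ b : G, op a b = e)))
    ↔
    ((∀ a b : G, (∃! x : G, op x a = b) ∧ (∃! y : G, op a y = b)) ∧
     (∀ a b c : G, op a (op b c) = op (op b a) c)) := by
  constructor
  · rintro ⟨hassoc, hcomm, e, he, hinv⟩
    refine ⟨fun a b => ?_, fun a b c => by rw [hassoc, hcomm a b]⟩
    obtain ⟨a', ha⟩ := hinv a
    have hright := existsUnique_right_solution hassoc (fun x => (he x).1) ha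
      (by rwa [hcomm]) b
    simpa only [hcomm _ a, and_self] using hright
  · rintro ⟨hH, hAG⟩
    have hcancel : ∀ a x y : G, op x a = op y a → x = y :=
      fun _ _ _ => cancel_right fun a b => (hH a b).1
    have hassoc := assoc_of_cancel_right hcancel hAG
    have hcomm := comm_of_cancel_right hcancel hAG
    obtain ⟨a₀⟩ := ‹Nonempty G›
    obtain ⟨e, he, -⟩ := (hH a₀ a₀).1
    have hleft := left_neutral_of_solvable hassoc (fun b => (hH a₀ b).2.exists) he
    exact ⟨hassoc, hcomm, e, fun a => ⟨hleft a, by rw [hcomm, hleft]⟩,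
      fun a => (hH a e).2.exists⟩
end

section
/- Let G be a nonempty set with a binary operation +. Then (G, +) is an abelian group (+ is associative and commutative, there is a two-sided neutral element e, and every a in G has b with a + b = e) if and only if + satisfies the Hilbert property H (for all a, b in G the equations x + a = b and a + y = b each have a unique solution) and the reduced product property ((a + b) + c = a + (c + b) for all a, b, c in G). -/
/-!
An abelian group satisfies H and R at once. Conversely, uniqueness in H makes `+` left
cancellative. Expanding `((a + b) + c) + a` by R in two ways gives
`a + (a + (b + c)) = a + (a + (c + b))`, so `+` is commutative, and then R is associativity.
Solving `x + a = a` for one `a` gives a left neutral `e` (every `b` is `a + y`), and solving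
`b + y = e` gives inverses.
-/

section

variable {G : Type*} {op : G → G → G}

theorem reducedProduct_of_assoc_of_comm (hassoc : ∀ a b c, op a (op b c) = op (op a b) c)
    (hcomm : ∀ a b, op a b = op b a) (a b c : G) : op (op a b) c = op a (op c b) := by
  rw [← hassoc, hcomm c b]

theorem existsUnique_right_solution (hassoc : ∀ a b c, op a (op b c) = op (op a b) c)
    {e : G} (he : ∀ a, op e a = a) {a i : G} (hai : op a i = e) (hia : op i a = e) (b : G) :
    ∃! y, op a y = b :=
  ⟨op i b, show op a (op i b) = b by rw [hassoc, hai, he],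
    fun y hy => by rw [← hy, hassoc, hia, he]⟩

theorem left_cancel_of_existsUnique_right_solution (h : ∀ a b : G, ∃! y, op a y = b)
    {a x y : G} (hxy : op a x = op a y) : x = y :=
  (h a (op a y)).unique hxy rfl

theorem comm_of_reducedProduct [Nonempty G] (hcancel : ∀ a x y : G, op a x = op a y → x = y)
    (hR : ∀ a b c : G, op (op a b) c = op a (op c b)) (b c : G) : op b c = op c b := by
  obtain ⟨a⟩ := ‹Nonempty G›
  have h₁ : op (op (op a b) c) a = op a (op a (op b c)) := by
    rw [hR (op a b) c a, hR a b (op a c), hR a c b]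
  have h₂ : op (op (op a b) c) a = op a (op a (op c b)) := by
    rw [hR a b c, hR a (op c b) a]
  exact hcancel a _ _ (hcancel a _ _ (h₁.symm.trans h₂))

theorem exists_left_neutral [Nonempty G] (hassoc : ∀ a b c, op a (op b c) = op (op a b) c)
    (hleft : ∀ a b : G, ∃ x, op x a = b) (hright : ∀ a b : G, ∃ y, op a y = b) :
    ∃ e, ∀ b, op e b = b := by
  obtain ⟨a⟩ := ‹Nonempty G›
  obtain ⟨e, he⟩ := hleft a a
  refine ⟨e, fun b => ?_⟩
  obtain ⟨y, rfl⟩ := hright a b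
  rw [hassoc, he]

end

/-- (G, +) is an abelian group iff it satisfies H and R. -/
theorem stmt_19 {G : Type*} [Nonempty G] (op : G → G → G) :
    ((∀ a b c : G, op a (op b c) = op (op a b) c) ∧
     (∀ a b : G, op a b = op b a) ∧
     (∃ e : G, (∀ a : G, op e a = a ∧ op a e = a) ∧ (∀ a : G, ∃ b : G, op a b = e)))
    ↔
    ((∀ a b : G, (∃! x : G, op x a = b) ∧ (∃! y : G, op a y = b)) ∧
     (∀ a b c : G, op (op a b) c = op a (op c b))) := by
  constructor
  · rintro ⟨hassoc, hcomm, e, he, hinv⟩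
    have hright (a b : G) : ∃! y, op a y = b := by
      obtain ⟨i, hai⟩ := hinv a
      exact existsUnique_right_solution hassoc (fun a => (he a).1) hai (hcomm i a ▸ hai) b
    refine ⟨fun a b => ⟨?_, hright a b⟩, reducedProduct_of_assoc_of_comm hassoc hcomm⟩
    simpa only [hcomm _ a] using hright a b
  · rintro ⟨hH, hR⟩
    have hcomm := comm_of_reducedProduct (op := op)
      (fun _ _ _ => left_cancel_of_existsUnique_right_solution fun a b => (hH a b).2) hR
    have hassoc (a b c : G) : op a (op b c) = op (op a b) c := by
      rw [hR, hcomm c b]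
    obtain ⟨e, he⟩ := exists_left_neutral hassoc (fun a b => (hH a b).1.exists)
      (fun a b => (hH a b).2.exists)
    exact ⟨hassoc, hcomm, e, fun a => ⟨he a, hcomm a e ▸ he a⟩,
      fun a => (hH a e).2.exists⟩
end
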